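/- Projector characterization of non-signalling channels: A matrix M on A_I ⊗ A_O ⊗ B_I ⊗ B_O satisfies the two non-signalling conditions D_{A_O}(M) = D_{A_I A_O}(M) and D_{B_O}(M) = D_{B_I B_O}(M) if and only if L_ns(M) = M, where L_ns(M) := M - D_{A_O}(M) + D_{A_I A_O}(M) - D_{B_O}(M) + D_{A_O B_O}(M) - D_{A_I A_O B_O}(M) + D_{B_I B_O}(M) - D_{A_O B_I B_O}(M) + D_{A_I A_O B_I B_O}(M). -/

import Mathlib

open scoped BigOperators ComplexOrder

/-- Trace-and-replace map `D_X` on the collection `S` of tensor factors: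
`D_S(W) = (1/d_S) * (1_S ⊗ tr_S(W))`, written entrywise. -/
noncomputable def Dset {ι : Type} [Fintype ι] [DecidableEq ι] {F : ι → Type}
    [∀ i, Fintype (F i)] [∀ i, DecidableEq (F i)]
    (S : Finset ι) (M : Matrix ((i : ι) → F i) ((i : ι) → F i) ℂ) :
    Matrix ((i : ι) → F i) ((i : ι) → F i) ℂ :=
  fun p q =>
    ((if ∀ i ∈ S, p i = q i then (1 : ℂ) else 0) / ∏ i ∈ S, (Fintype.card (F i) : ℂ)) *
      ((∑ r : (i : ι) → F i,
          M (fun i => if i ∈ S then r i else p i) (fun i => if i ∈ S then r i else q i)) /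
        ∏ i ∈ Sᶜ, (Fintype.card (F i) : ℂ))

/-- Index of the two-party space `A_I ⊗ A_O ⊗ B_I ⊗ B_O`:
slot `0 = A_I`, `1 = A_O`, `2 = B_I`, `3 = B_O`, with dimensions `d i`. -/
abbrev PIdx (d : Fin 4 → ℕ) : Type := (i : Fin 4) → Fin (d i)

abbrev PMat (d : Fin 4 → ℕ) : Type := Matrix (PIdx d) (PIdx d) ℂ

/-- The projector `L_V` onto the subspace of valid two-party process matrices. -/
noncomputable def LV {d : Fin 4 → ℕ} (W : PMat d) : PMat d :=
  Dset ({1} : Finset (Fin 4)) W + Dset ({3} : Finset (Fin 4)) W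
    - Dset ({1, 3} : Finset (Fin 4)) W - Dset ({2, 3} : Finset (Fin 4)) W
    + Dset ({1, 2, 3} : Finset (Fin 4)) W - Dset ({0, 1} : Finset (Fin 4)) W
    + Dset ({0, 1, 3} : Finset (Fin 4)) W

/-- Two-party process matrix: positive semidefinite, `L_V(W) = W`,
and `tr W = d_{A_O} * d_{B_O}`. -/
def IsProc {d : Fin 4 → ℕ} (W : PMat d) : Prop :=
  W.PosSemidef ∧ LV W = W ∧ W.trace = (d 1 : ℂ) * (d 3 : ℂ)

/-- Free (non-signalling) process matrix: a process matrix with `D_{A_O B_O}(W) = W`. -/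
def IsFree {d : Fin 4 → ℕ} (W : PMat d) : Prop :=
  IsProc W ∧ Dset ({1, 3} : Finset (Fin 4)) W = W

/-- Signalling robustness. -/
noncomputable def Rs {d : Fin 4 → ℕ} (W : PMat d) : ℝ :=
  sInf { s : ℝ | 0 ≤ s ∧ ∃ T C : PMat d, IsProc T ∧ IsFree C ∧
    W + (s : ℂ) • T = ((1 + s : ℝ) : ℂ) • C }

/-- Causal order `A ≺ B`: `D_{B_O}(W) = W` and `D_{B_O B_I}(W) = D_{B_O B_I A_O}(W)`. -/
def OrderedAB {d : Fin 4 → ℕ} (W : PMat d) : Prop :=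
  Dset ({3} : Finset (Fin 4)) W = W ∧
    Dset ({2, 3} : Finset (Fin 4)) W = Dset ({1, 2, 3} : Finset (Fin 4)) W

/-- Causal order `B ≺ A`: `D_{A_O}(W) = W` and `D_{A_O A_I}(W) = D_{A_O A_I B_O}(W)`. -/
def OrderedBA {d : Fin 4 → ℕ} (W : PMat d) : Prop :=
  Dset ({1} : Finset (Fin 4)) W = W ∧
    Dset ({0, 1} : Finset (Fin 4)) W = Dset ({0, 1, 3} : Finset (Fin 4)) W

/-- The projector `L_ns` onto the span of non-signalling channels `A_I B_I → A_O B_O`. -/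
noncomputable def Lns {d : Fin 4 → ℕ} (M : PMat d) : PMat d :=
  M - Dset ({1} : Finset (Fin 4)) M + Dset ({0, 1} : Finset (Fin 4)) M
    - Dset ({3} : Finset (Fin 4)) M + Dset ({1, 3} : Finset (Fin 4)) M
    - Dset ({0, 1, 3} : Finset (Fin 4)) M + Dset ({2, 3} : Finset (Fin 4)) M
    - Dset ({1, 2, 3} : Finset (Fin 4)) M + Dset ({0, 1, 2, 3} : Finset (Fin 4)) M

/-! `D_S ∘ D_T = D_{S ∪ T}`, so all the maps `D_S` commute and `L_ns = P_A ∘ P_B` with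
`P_A = 1 - D_{A_O} + D_{A_I A_O}` and `P_B = 1 - D_{B_O} + D_{B_I B_O}` commuting idempotents.
A fixed point of `P_A ∘ P_B` is therefore fixed by `P_A` and by `P_B`, and `P_A M = M` is exactly
`D_{A_O}(M) = D_{A_I A_O}(M)`. -/

lemma piecewise_piecewise_eq_piecewise_union {ι : Type*} [DecidableEq ι] {F : ι → Type*}
    (S T : Finset ι) (s r p : (i : ι) → F i) :
    T.piecewise s (S.piecewise r p) = (S ∪ T).piecewise (T.piecewise s r) p := by
  ext i
  by_cases hT : i ∈ T <;> by_cases hS : i ∈ S <;> simp [Finset.piecewise, hT, hS]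

/-- Swapping the `T`-coordinates of a pair of indices is an involution, which turns the double
sum into `∑ r, ∑ s, g r`. -/
lemma sum_sum_piecewise {ι : Type*} [Fintype ι] [DecidableEq ι] {F : ι → Type*}
    [∀ i, Fintype (F i)] (T : Finset ι) (g : ((i : ι) → F i) → ℂ) :
    ∑ r, ∑ s, g (T.piecewise s r) = Fintype.card ((i : ι) → F i) * ∑ u, g u := by
  have swap : Function.Involutive fun x : ((i : ι) → F i) × ((i : ι) → F i) =>
      (T.piecewise x.2 x.1, T.piecewise x.1 x.2) := by
    intro x
    refine Prod.ext (funext fun i => ?_) (funext fun i => ?_) <;> by_cases h : i ∈ T <;> simp [h]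
  calc ∑ r, ∑ s, g (T.piecewise s r)
      = ∑ x : ((i : ι) → F i) × ((i : ι) → F i), g (T.piecewise x.2 x.1) := by
        rw [Fintype.sum_prod_type]
    _ = ∑ x : ((i : ι) → F i) × ((i : ι) → F i), g x.1 :=
        Equiv.sum_comp (Function.Involutive.toPerm _ swap) fun y => g y.1
    _ = Fintype.card ((i : ι) → F i) * ∑ u, g u := by
        rw [Fintype.sum_prod_type]
        simp [Finset.mul_sum, mul_comm]

section Dset

variable {ι : Type} [Fintype ι] [DecidableEq ι] {F : ι → Type}
  [∀ i, Fintype (F i)] [∀ i, DecidableEq (F i)]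

lemma Dset_add (S : Finset ι) (A B : Matrix ((i : ι) → F i) ((i : ι) → F i) ℂ) :
    Dset S (A + B) = Dset S A + Dset S B := by
  funext p q
  simp only [Dset, Matrix.add_apply, Finset.sum_add_distrib, add_div, mul_add]

lemma Dset_sub (S : Finset ι) (A B : Matrix ((i : ι) → F i) ((i : ι) → F i) ℂ) :
    Dset S (A - B) = Dset S A - Dset S B := by
  funext p q
  simp only [Dset, Matrix.sub_apply, Finset.sum_sub_distrib, sub_div, mul_sub]

lemma Dset_apply (S : Finset ι) (M : Matrix ((i : ι) → F i) ((i : ι) → F i) ℂ)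
    (p q : (i : ι) → F i) :
    Dset S M p q = (if ∀ i ∈ S, p i = q i then 1 else 0) / Fintype.card ((i : ι) → F i) *
      ∑ r, M (S.piecewise r p) (S.piecewise r q) := by
  rw [Dset, div_mul_div_comm, Finset.prod_mul_prod_compl, ← mul_div_right_comm,
    Fintype.card_pi, Nat.cast_prod]
  rfl

lemma Dset_Dset (S T : Finset ι) (M : Matrix ((i : ι) → F i) ((i : ι) → F i) ℂ) :
    Dset S (Dset T M) = Dset (S ∪ T) M := by
  funext p q
  simp only [Dset_apply, piecewise_piecewise_eq_piecewise_union S T]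
  by_cases hS : ∀ i ∈ S, p i = q i
  · have hT (r : (i : ι) → F i) :
        (∀ i ∈ T, S.piecewise r p i = S.piecewise r q i) ↔ ∀ i ∈ T, p i = q i := by
      refine forall₂_congr fun i _ => ?_
      by_cases hi : i ∈ S <;> simp [hi, hS]
    have hST : (∀ i ∈ S ∪ T, p i = q i) ↔ ∀ i ∈ T, p i = q i := by
      simp only [Finset.mem_union, or_imp, forall_and]
      exact and_iff_right hS
    simp only [hT, hST, if_pos hS, ← Finset.mul_sum]
    rw [sum_sum_piecewise T fun u => M ((S ∪ T).piecewise u p) ((S ∪ T).piecewise u q)]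
    generalize (Fintype.card ((i : ι) → F i) : ℂ) = N
    -- when `N = 0` both sides vanish, since `x / 0 = 0`
    rcases eq_or_ne N 0 with hN | hN
    · simp [hN]
    · field_simp
  · have hST : ¬ ∀ i ∈ S ∪ T, p i = q i :=
      fun h => hS fun i hi => h i (Finset.mem_union_left T hi)
    simp only [if_neg hS, if_neg hST, zero_div, zero_mul]

/-- For `S ⊆ T`, the projector onto `{M | D_S(M) = D_T(M)}`. -/
noncomputable def Dset.eqProj (S T : Finset ι)
    (M : Matrix ((i : ι) → F i) ((i : ι) → F i) ℂ) :
    Matrix ((i : ι) → F i) ((i : ι) → F i) ℂ :=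
  M - Dset S M + Dset T M

lemma Dset.eqProj_eq_self_iff (S T : Finset ι)
    (M : Matrix ((i : ι) → F i) ((i : ι) → F i) ℂ) :
    Dset.eqProj S T M = M ↔ Dset S M = Dset T M := by
  rw [Dset.eqProj, sub_add_eq_add_sub, sub_eq_iff_eq_add, add_right_inj, eq_comm]

lemma Dset.eqProj_idem {S T : Finset ι} (h : S ⊆ T)
    (M : Matrix ((i : ι) → F i) ((i : ι) → F i) ℂ) :
    Dset.eqProj S T (Dset.eqProj S T M) = Dset.eqProj S T M := by
  simp only [Dset.eqProj, Dset_add, Dset_sub, Dset_Dset, Finset.union_self,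
    Finset.union_eq_right.mpr h, Finset.union_eq_left.mpr h]
  abel

lemma Dset.eqProj_comm (S T S' T' : Finset ι)
    (M : Matrix ((i : ι) → F i) ((i : ι) → F i) ℂ) :
    Dset.eqProj S T (Dset.eqProj S' T' M) = Dset.eqProj S' T' (Dset.eqProj S T M) := by
  simp only [Dset.eqProj, Dset_add, Dset_sub, Dset_Dset, Finset.union_comm S S',
    Finset.union_comm S T', Finset.union_comm T S', Finset.union_comm T T']
  abel

lemma Dset.eqProj_eqProj_eq_self_iff {S T S' T' : Finset ι} (h : S ⊆ T) (h' : S' ⊆ T')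
    (M : Matrix ((i : ι) → F i) ((i : ι) → F i) ℂ) :
    Dset.eqProj S T (Dset.eqProj S' T' M) = M ↔
      Dset S M = Dset T M ∧ Dset S' M = Dset T' M := by
  rw [← Dset.eqProj_eq_self_iff, ← Dset.eqProj_eq_self_iff]
  refine ⟨fun hM => ⟨?_, ?_⟩, fun ⟨hM, hM'⟩ => by rw [hM', hM]⟩
  · rw [← hM, Dset.eqProj_idem h]
  · rw [← hM, Dset.eqProj_comm, Dset.eqProj_idem h']

end Dset

lemma Lns_eq_eqProj_eqProj {d : Fin 4 → ℕ} (M : PMat d) :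
    Lns M = Dset.eqProj {1} {0, 1} (Dset.eqProj {3} {2, 3} M) := by
  simp only [Lns, Dset.eqProj, Dset_add, Dset_sub, Dset_Dset, Finset.insert_union,
    Finset.singleton_union]
  abel

theorem nonsignalling_iff_Lns_general {d : Fin 4 → ℕ} (M : PMat d) :
    (Dset ({1} : Finset (Fin 4)) M = Dset ({0, 1} : Finset (Fin 4)) M ∧
      Dset ({3} : Finset (Fin 4)) M = Dset ({2, 3} : Finset (Fin 4)) M) ↔ Lns M = M := by
  rw [Lns_eq_eqProj_eqProj, Dset.eqProj_eqProj_eq_self_iff (by decide) (by decide)]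

/-- Projector characterization of non-signalling channels: a matrix `M` on
`A_I ⊗ A_O ⊗ B_I ⊗ B_O` satisfies `D_{A_O}(M) = D_{A_I A_O}(M)` and
`D_{B_O}(M) = D_{B_I B_O}(M)` iff `L_ns(M) = M`. -/
theorem nonsignalling_iff_Lns {d : Fin 4 → ℕ} (hd : ∀ i, 0 < d i) (M : PMat d) :
    (Dset ({1} : Finset (Fin 4)) M = Dset ({0, 1} : Finset (Fin 4)) M ∧
      Dset ({3} : Finset (Fin 4)) M = Dset ({2, 3} : Finset (Fin 4)) M) ↔ Lns M = M :=
  nonsignalling_iff_Lns_general M
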